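/- arXiv:math/0101022 — 4 statements merged into one kernel-verified Lean document; each statement's English description precedes it below -/
import Mathlib

section
/- Let E be a Banach space and L, P bounded linear operators on E, and set Q = I − P. Then for every t ∈ ℝ the Dyson formula holds: exp(tL) = exp(t(Q∘L)) + ∫_0^t exp((t−s)L) ∘ P ∘ L ∘ exp(s(Q∘L)) ds, where exp denotes the operator exponential and the integral is a Bochner integral of operator-valued functions. -/
open NormedSpace intervalIntegral

set_option maxHeartbeats 1000000 in
set_option synthInstance.maxHeartbeats 500000 in
/-- the Dyson formula
`exp(tL) = exp(t QL) + ∫_0^t exp((t−s)L) ∘ P ∘ L ∘ exp(s QL) ds`. -/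
theorem dyson_formula
    (E : Type*) [NormedAddCommGroup E] [NormedSpace ℝ E] [CompleteSpace E]
    (L P : E →L[ℝ] E) (Q : E →L[ℝ] E) (hQ : Q = 1 - P) (t : ℝ) :
    NormedSpace.exp (t • L)
      = NormedSpace.exp (t • (Q ∘L L))
        + ∫ s in (0:ℝ)..t,
            NormedSpace.exp ((t - s) • L) ∘L P ∘L L
              ∘L NormedSpace.exp (s • (Q ∘L L)) := by
  set A : E →L[ℝ] E := Q ∘L L with hA
  set f : ℝ → (E →L[ℝ] E) := fun s => exp ((t - s) • L) * exp (s • A) with hf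
  have hderiv : ∀ s ∈ Set.uIcc (0:ℝ) t,
      HasDerivAt f (-(exp ((t - s) • L) * ((P ∘L L) * exp (s • A)))) s := by
    intro s _
    have hin : HasDerivAt (fun u : ℝ => t - u) (-1) s := by
      simpa using (hasDerivAt_id s).const_sub t
    have h0 : HasDerivAt (fun u : ℝ => exp (u • L)) (exp ((t - s) • L) * L) (t - s) :=
      hasDerivAt_exp_smul_const (𝕂 := ℝ) (𝔸 := E →L[ℝ] E) L (t - s)
    have h1 : HasDerivAt (fun u : ℝ => exp ((t - u) • L))
        (-(exp ((t - s) • L) * L)) s := by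
      have := h0.scomp s hin
      rw [neg_one_smul] at this
      exact this
    have h2 : HasDerivAt (fun u : ℝ => exp (u • A))
        (A * exp (s • A)) s :=
      hasDerivAt_exp_smul_const' (𝕂 := ℝ) (𝔸 := E →L[ℝ] E) A s
    have hmul := h1.mul h2
    have hc : Commute ((t - s) • L) L := by
      show ((t - s) • L) * L = L * ((t - s) • L)
      rw [smul_mul_assoc, mul_smul_comm]
    have hcomm : exp ((t - s) • L) * L = L * exp ((t - s) • L) := hc.exp_left.eq
    have hPL : (P ∘L L : E →L[ℝ] E) = L - A := by
      rw [hA, hQ]; ext x; simp [ContinuousLinearMap.sub_apply]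
    have key : -(exp ((t - s) • L) * ((P ∘L L) * exp (s • A)))
        = -(exp ((t - s) • L) * L) * exp (s • A)
          + exp ((t - s) • L) * (A * exp (s • A)) := by
      rw [hPL, sub_mul, mul_sub, neg_sub, ← mul_assoc, hcomm, ← hcomm, neg_mul, mul_assoc]
      abel
    rw [key]
    exact hmul
  have hcont : ContinuousOn
      (fun s => -(exp ((t - s) • L) * ((P ∘L L) * exp (s • A)))) (Set.uIcc (0:ℝ) t) := by
    apply Continuous.continuousOn
    have c1 : Continuous fun s : ℝ => exp ((t - s) • L) := by
      letI : NormedAlgebra ℚ (E →L[ℝ] E) := NormedAlgebra.restrictScalars ℚ ℝ (E →L[ℝ] E)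
      exact exp_continuous.comp ((continuous_const.sub continuous_id).smul continuous_const)
    have c2 : Continuous fun s : ℝ => exp (s • A) := by
      letI : NormedAlgebra ℚ (E →L[ℝ] E) := NormedAlgebra.restrictScalars ℚ ℝ (E →L[ℝ] E)
      exact exp_continuous.comp (continuous_id.smul continuous_const)
    exact ((c1.mul (continuous_const.mul c2))).neg
  have hint := intervalIntegral.integral_eq_sub_of_hasDerivAt hderiv
    (hcont.intervalIntegrable)
  have hf0 : f 0 = exp (t • L) := by simp [hf]
  have hft : f t = exp (t • A) := by simp [hf]
  rw [hf0, hft, intervalIntegral.integral_neg] at hint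
  have h3 : (∫ s in (0:ℝ)..t, exp ((t - s) • L) * ((P ∘L L) * exp (s • A)))
      = exp (t • L) - exp (t • A) := by
    have h4 : -(∫ s in (0:ℝ)..t, exp ((t - s) • L) * ((P ∘L L) * exp (s • A)))
        = exp (t • A) - exp (t • L) := hint
    rw [neg_eq_iff_eq_neg] at h4
    rw [h4, neg_sub]
  have hrw : (∫ s in (0:ℝ)..t,
      NormedSpace.exp ((t - s) • L) ∘L P ∘L L ∘L NormedSpace.exp (s • A))
      = ∫ s in (0:ℝ)..t, exp ((t - s) • L) * ((P ∘L L) * exp (s • A)) := by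
    congr 1
  rw [hrw, h3]
  abel
end

section
/- Let E be a Banach space, L and P bounded linear operators on E, Q = I − P, and u ∈ E. Then for every t ∈ ℝ the generalized Langevin identity holds: exp(tL)(L u) = exp(tL)(P(L u)) + ∫_0^t exp((t−s)L)(P(L(exp(s(Q∘L))(Q(L u))))) ds + exp(t(Q∘L))(Q(L u)). Equivalently, the derivative of t ↦ exp(tL)u splits into a Markovian term, a memory integral, and an orthogonal-dynamics term. -/
set_option maxHeartbeats 1000000
set_option synthInstance.maxHeartbeats 100000


open NormedSpace intervalIntegral

/-- the generalized Langevin identity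
`exp(tL)(Lu) = exp(tL)(P(Lu)) + ∫_0^t exp((t−s)L)(P(L(exp(sQL)(Q(Lu))))) ds
  + exp(tQL)(Q(Lu))`. -/
theorem generalized_langevin_identity
    (E : Type*) [NormedAddCommGroup E] [NormedSpace ℝ E] [CompleteSpace E]
    (L P : E →L[ℝ] E) (Q : E →L[ℝ] E) (hQ : Q = 1 - P) (u : E) (t : ℝ) :
    NormedSpace.exp (t • L) (L u)
      = NormedSpace.exp (t • L) (P (L u))
        + (∫ s in (0:ℝ)..t,
            NormedSpace.exp ((t - s) • L)
              (P (L (NormedSpace.exp (s • (Q ∘L L)) (Q (L u))))))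
        + NormedSpace.exp (t • (Q ∘L L)) (Q (L u)) := by
  set v : E := Q (L u) with hv
  set B : E →L[ℝ] E := Q ∘L L with hB
  -- derivative of s ↦ exp((t-s)L) (exp(sB) v)
  have hderiv : ∀ s : ℝ, HasDerivAt
      (fun s : ℝ => (NormedSpace.exp ((t - s) • L) * NormedSpace.exp (s • B)) v)
      (-(NormedSpace.exp ((t - s) • L) (P (L (NormedSpace.exp (s • B) v))))) s := by
    intro s
    have hg : HasDerivAt (fun s : ℝ => t - s) (-1) s := by
      simpa using (hasDerivAt_id s).const_sub t
    have h1 : HasDerivAt (fun s : ℝ => NormedSpace.exp ((t - s) • L))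
        (-(NormedSpace.exp ((t - s) • L) * L)) s := by
      have h := (hasDerivAt_exp_smul_const (𝕂 := ℝ) L (t - s)).scomp s hg
      simp only [neg_one_smul] at h
      exact h
    have h2 : HasDerivAt (fun s : ℝ => NormedSpace.exp (s • B))
        (NormedSpace.exp (s • B) * B) s :=
      hasDerivAt_exp_smul_const (𝕂 := ℝ) B s
    have hmul := h1.mul h2
    have hap := hmul.clm_apply (hasDerivAt_const s v)
    have hcomm : NormedSpace.exp (s • B) * B = B * NormedSpace.exp (s • B) :=
      (((Commute.refl B).smul_left s).exp_left).eq
    convert hap using 1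
    · rfl
    rw [hcomm]
    simp only [hB, hQ, ContinuousLinearMap.add_apply, ContinuousLinearMap.mul_apply,
      ContinuousLinearMap.neg_apply, ContinuousLinearMap.coe_comp', Function.comp_apply,
      ContinuousLinearMap.sub_apply, ContinuousLinearMap.one_apply, map_sub, map_zero]
    abel
  have hcont : Continuous fun s : ℝ =>
      NormedSpace.exp ((t - s) • L) (P (L (NormedSpace.exp (s • B) v))) := by
    have hc1 : Continuous fun s : ℝ => NormedSpace.exp ((t - s) • L) :=
      (letI : NormedAlgebra ℚ (E →L[ℝ] E) := .restrictScalars ℚ ℝ _; NormedSpace.exp_continuous).comp (by continuity)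
    have hc2 : Continuous fun s : ℝ => P (L (NormedSpace.exp (s • B) v)) := by
      have : Continuous fun s : ℝ => NormedSpace.exp (s • B) :=
        (letI : NormedAlgebra ℚ (E →L[ℝ] E) := .restrictScalars ℚ ℝ _; NormedSpace.exp_continuous).comp (by continuity)
      exact P.continuous.comp (L.continuous.comp
        (this.clm_apply continuous_const))
    exact hc1.clm_apply hc2
  have key := intervalIntegral.integral_eq_sub_of_hasDerivAt
      (f := fun s : ℝ => (NormedSpace.exp ((t - s) • L) * NormedSpace.exp (s • B)) v)
      (fun s _ => hderiv s) ((hcont.neg).intervalIntegrable 0 t)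
  rw [intervalIntegral.integral_neg] at key
  have hend : ((NormedSpace.exp ((t - t) • L) * NormedSpace.exp (t • B)) v)
      = NormedSpace.exp (t • B) v := by
    simp [NormedSpace.exp_zero]
  have hstart : ((NormedSpace.exp ((t - 0) • L) * NormedSpace.exp ((0:ℝ) • B)) v)
      = NormedSpace.exp (t • L) v := by
    simp [NormedSpace.exp_zero]
  simp only [hend, hstart] at key
  have hint : (∫ s in (0:ℝ)..t,
      NormedSpace.exp ((t - s) • L) (P (L (NormedSpace.exp (s • B) v))))
      = NormedSpace.exp (t • L) v - NormedSpace.exp (t • B) v := by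
    have := neg_eq_iff_eq_neg.mp key
    rw [this]; abel
  rw [hint]
  have hsplit : L u = P (L u) + v := by
    simp [hv, hQ]
  nth_rewrite 1 [hsplit]
  rw [map_add]
  abel
end

section
/- Let E be a Banach space, L a bounded linear operator on E, P a bounded linear projection (P ∘ P = P), Q = I − P, and T > 0. Then there exists a constant C > 0 such that for all s ∈ [0, T], ‖P∘L∘exp(s(Q∘L))∘Q∘L − P∘L∘Q∘exp(sL)∘Q∘L‖ ≤ C s² in operator norm; i.e., replacing the orthogonal-dynamics evolution exp(sQL) by the true evolution exp(sL) inside the memory kernel introduces only a second-order error in s. -/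
open NormedSpace

lemma exp_remainder_bound {𝔸 : Type*} [NormedRing 𝔸] [NormedAlgebra ℝ 𝔸]
    [CompleteSpace 𝔸] (x : 𝔸) :
    ‖exp x - 1 - x‖ ≤ ‖x‖ ^ 2 * Real.exp ‖x‖ := by
  have hs : Summable fun n : ℕ => (((n.factorial : ℝ)⁻¹) • x ^ n) := expSeries_summable' (𝕂 := ℝ) x
  have key : exp x - 1 - x = ∑' n : ℕ, ((((n + 2).factorial : ℝ)⁻¹) • x ^ (n + 2)) := by
    have h2 := Summable.sum_add_tsum_nat_add 2 hs
    rw [exp_eq_tsum ℝ]; beta_reduce; rw [← h2]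
    simp [Finset.sum_range_succ]
    abel
  rw [key]
  have hmaj : Summable fun n : ℕ => ‖x‖ ^ 2 * (‖x‖ ^ n / n.factorial) :=
    (Real.summable_pow_div_factorial ‖x‖).mul_left _
  have hbound : ∀ n : ℕ, ‖((((n + 2).factorial : ℝ)⁻¹) • x ^ (n + 2))‖ ≤ ‖x‖ ^ 2 * (‖x‖ ^ n / n.factorial) := by
    intro n
    calc ‖((((n + 2).factorial : ℝ)⁻¹) • x ^ (n + 2))‖ ≤ (((n + 2).factorial : ℝ)⁻¹) * ‖x‖ ^ (n + 2) := by
          rw [norm_smul, Real.norm_eq_abs, abs_of_nonneg (by positivity)]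
          gcongr
          exact norm_pow_le' x (by omega)
      _ ≤ ((n.factorial : ℝ)⁻¹) * ‖x‖ ^ (n + 2) := by
          have h : (((n + 2).factorial : ℝ))⁻¹ ≤ ((n.factorial : ℝ))⁻¹ :=
            inv_anti₀ (by positivity)
              (by exact_mod_cast Nat.factorial_le (by omega))
          exact mul_le_mul_of_nonneg_right h (by positivity)
      _ = ‖x‖ ^ 2 * (‖x‖ ^ n / n.factorial) := by ring
  calc ‖∑' n : ℕ, ((((n + 2).factorial : ℝ)⁻¹) • x ^ (n + 2))‖
      ≤ ∑' n : ℕ, (‖x‖ ^ 2 * (‖x‖ ^ n / n.factorial)) :=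
        tsum_of_norm_bounded hmaj.hasSum hbound
    _ = ‖x‖ ^ 2 * ∑' n : ℕ, (‖x‖ ^ n / n.factorial) := tsum_mul_left
    _ = ‖x‖ ^ 2 * Real.exp ‖x‖ := by
        congr 1
        rw [Real.exp_eq_exp_ℝ, exp_eq_tsum_div]

set_option synthInstance.maxHeartbeats 1000000 in
/-- replacing `exp(sQL)` by `exp(sL)` inside the memory kernel
introduces only a second-order error in `s`:
`‖PL exp(sQL) QL − PLQ exp(sL) QL‖ ≤ C s²` on `[0,T]`. -/
theorem memory_kernel_zeroth_order_approx
    (E : Type*) [NormedAddCommGroup E] [NormedSpace ℝ E] [CompleteSpace E]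
    (L P : E →L[ℝ] E) (hP : P ∘L P = P) (Q : E →L[ℝ] E) (hQ : Q = 1 - P)
    (T : ℝ) (hT : 0 < T) :
    ∃ C > 0, ∀ s ∈ Set.Icc (0:ℝ) T,
      ‖P ∘L L ∘L NormedSpace.exp (s • (Q ∘L L)) ∘L Q ∘L L
        - P ∘L L ∘L Q ∘L NormedSpace.exp (s • L) ∘L Q ∘L L‖ ≤ C * s ^ 2 := by
  have hP' : P * P = P := hP
  have hQQ : Q * Q = Q := by
    rw [hQ]; simp only [sub_mul, mul_sub, one_mul, mul_one, hP']; abel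
  have hQQ' : ∀ z : E →L[ℝ] E, Q * (Q * z) = Q * z := fun z => by
    rw [← mul_assoc, hQQ]
  set A : E →L[ℝ] E := Q * L with hA
  refine ⟨‖P * L‖ * ‖A‖ * (‖A‖ ^ 2 * Real.exp (T * ‖A‖))
      + ‖P * L * Q‖ * ‖A‖ * (‖L‖ ^ 2 * Real.exp (T * ‖L‖)) + 1, by positivity, ?_⟩
  rintro s ⟨hs0, hsT⟩
  have key : P ∘L L ∘L NormedSpace.exp (s • (Q ∘L L)) ∘L Q ∘L L
        - P ∘L L ∘L Q ∘L NormedSpace.exp (s • L) ∘L Q ∘L L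
      = P * L * (NormedSpace.exp (s • A) - 1 - s • A) * A
        - P * L * Q * (NormedSpace.exp (s • L) - 1 - s • L) * A := by
    show P * (L * (NormedSpace.exp (s • A) * (Q * L)))
        - P * (L * (Q * (NormedSpace.exp (s • L) * (Q * L)))) = _
    simp only [mul_sub, sub_mul, mul_one, one_mul, mul_assoc, smul_mul_assoc,
      mul_smul_comm, hQQ', hA]
    abel
  have bnd : ∀ B : E →L[ℝ] E,
      ‖exp (s • B) - 1 - s • B‖ ≤ s ^ 2 * (‖B‖ ^ 2 * Real.exp (T * ‖B‖)) := by
    intro B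
    calc ‖exp (s • B) - 1 - s • B‖ ≤ ‖s • B‖ ^ 2 * Real.exp ‖s • B‖ :=
          exp_remainder_bound _
      _ = s ^ 2 * ‖B‖ ^ 2 * Real.exp (s * ‖B‖) := by
          rw [norm_smul s B, Real.norm_eq_abs, abs_of_nonneg hs0]; ring
      _ ≤ s ^ 2 * ‖B‖ ^ 2 * Real.exp (T * ‖B‖) := by
          have hTB : s * ‖B‖ ≤ T * ‖B‖ := by nlinarith [norm_nonneg B]
          gcongr <;> first | exact Real.exp_le_exp.mpr hTB | skip
      _ = s ^ 2 * (‖B‖ ^ 2 * Real.exp (T * ‖B‖)) := by ring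
  have b1 := bnd A
  have b2 := bnd L
  rw [key]
  have n1 : ‖P * L * (exp (s • A) - 1 - s • A) * A‖
      ≤ ‖P * L‖ * ‖exp (s • A) - 1 - s • A‖ * ‖A‖ :=
    le_trans (norm_mul_le _ _) (by gcongr; exact norm_mul_le _ _)
  have n2 : ‖P * L * Q * (exp (s • L) - 1 - s • L) * A‖
      ≤ ‖P * L * Q‖ * ‖exp (s • L) - 1 - s • L‖ * ‖A‖ :=
    le_trans (norm_mul_le _ _) (by gcongr; exact norm_mul_le _ _)
  have := norm_sub_le (P * L * (exp (s • A) - 1 - s • A) * A)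
    (P * L * Q * (exp (s • L) - 1 - s • L) * A)
  have hx1 : ‖P * L‖ * ‖exp (s • A) - 1 - s • A‖ * ‖A‖
      ≤ ‖P * L‖ * ‖A‖ * (‖A‖ ^ 2 * Real.exp (T * ‖A‖)) * s ^ 2 := by
    calc ‖P * L‖ * ‖exp (s • A) - 1 - s • A‖ * ‖A‖
        ≤ ‖P * L‖ * (s ^ 2 * (‖A‖ ^ 2 * Real.exp (T * ‖A‖))) * ‖A‖ := by gcongr
      _ = ‖P * L‖ * ‖A‖ * (‖A‖ ^ 2 * Real.exp (T * ‖A‖)) * s ^ 2 := by ring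
  have hx2 : ‖P * L * Q‖ * ‖exp (s • L) - 1 - s • L‖ * ‖A‖
      ≤ ‖P * L * Q‖ * ‖A‖ * (‖L‖ ^ 2 * Real.exp (T * ‖L‖)) * s ^ 2 := by
    calc ‖P * L * Q‖ * ‖exp (s • L) - 1 - s • L‖ * ‖A‖
        ≤ ‖P * L * Q‖ * (s ^ 2 * (‖L‖ ^ 2 * Real.exp (T * ‖L‖))) * ‖A‖ := by gcongr
      _ = ‖P * L * Q‖ * ‖A‖ * (‖L‖ ^ 2 * Real.exp (T * ‖L‖)) * s ^ 2 := by ring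
  nlinarith [sq_nonneg s]
end

section
/- Let H be a real Hilbert space, L a bounded skew-adjoint operator on H (⟪L u, v⟫ = −⟪u, L v⟫ for all u, v), (h_1, …, h_m) an orthonormal family in H, P' the orthogonal projection onto the span of {h_1, …, h_m}, and Q = I − P'. Then for every u ∈ H and every s ∈ ℝ, P'(L(exp(s(Q∘L))(Q(L u)))) = −Σ_{j=1}^{m} K_j(s) · h_j, where K_j(s) = ⟪exp(s(Q∘L))(Q(L u)), Q(L h_j)⟫; i.e., the memory kernels are autocorrelations of the orthogonal dynamics started from QLu with QLh_j. -/
open NormedSpace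

/-- with the linear projection `P'` onto an orthonormal family
`(h_1,…,h_m)` and a skew-adjoint Liouvillian `L`, the memory term is
`P' L exp(sQL) QLu = −∑_j K_j(s) h_j` with
`K_j(s) = ⟪exp(sQL)(QLu), QLh_j⟫`. -/
theorem memory_kernels_are_autocorrelations
    (H : Type*) [NormedAddCommGroup H] [InnerProductSpace ℝ H] [CompleteSpace H]
    (L : H →L[ℝ] H) (hL : ∀ u v : H, inner ℝ (L u) v = -(inner ℝ u (L v) : ℝ))
    (m : ℕ) (h : Fin m → H) (hh : Orthonormal ℝ h)
    (P' : H →L[ℝ] H) (hP' : ∀ w : H, P' w = ∑ j : Fin m, (inner ℝ w (h j) : ℝ) • h j)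
    (Q : H →L[ℝ] H) (hQ : Q = 1 - P')
    (u : H) (s : ℝ) :
    P' (L (NormedSpace.exp (s • (Q ∘L L)) (Q (L u))))
      = -∑ j : Fin m,
          (inner ℝ (NormedSpace.exp (s • (Q ∘L L)) (Q (L u))) (Q (L (h j))) : ℝ)
            • h j := by
  -- P' is idempotent
  have hij : ∀ i j, (inner ℝ (h i) (h j) : ℝ) = if i = j then 1 else 0 :=
    orthonormal_iff_ite.mp hh
  have key : ∀ (w : H) (j : Fin m), (inner ℝ (P' w) (h j) : ℝ) = inner ℝ w (h j) := by
    intro w j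
    rw [hP' w, sum_inner]
    simp [inner_smul_left, hij]
  have hPP : ∀ w : H, P' (P' w) = P' w := by
    intro w
    rw [hP' (P' w)]
    simp only [key]
    exact (hP' w).symm
  -- Q is idempotent on vectors
  have hQQ : ∀ w : H, Q (Q w) = Q w := by
    intro w
    simp [hQ, map_sub, hPP]
  -- Q is symmetric
  have hQsym : ∀ a b : H, (inner ℝ a (Q b) : ℝ) = inner ℝ (Q a) b := by
    intro a b
    simp only [hQ, ContinuousLinearMap.sub_apply, ContinuousLinearMap.one_apply,
      inner_sub_right, inner_sub_left]
    congr 1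
    rw [hP' a, hP' b, sum_inner, inner_sum]
    congr 1
    ext j
    rw [inner_smul_left, inner_smul_right]
    simp only [RCLike.star_def, starRingEnd_apply, star_trivial]
    rw [real_inner_comm (h j) b, real_inner_comm b (h j)]
    ring
  set A : H →L[ℝ] H := s • (Q ∘L L) with hA
  set x : H := Q (L u) with hx
  have hQx : Q x = x := hQQ (L u)
  have hQA : ∀ w : H, Q (A w) = A w := by
    intro w
    simp [hA, hQQ]
  have hpow : ∀ n : ℕ, Q ((A ^ n) x) = (A ^ n) x := by
    intro n
    cases n with
    | zero => simpa using hQx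
    | succ k =>
        rw [pow_succ']
        simpa using hQA ((A ^ k) x)
  -- Q fixes exp(sA) x
  have hkey : Q (NormedSpace.exp A x) = NormedSpace.exp A x := by
    have hsum : Summable (fun n : ℕ => ((n.factorial : ℝ))⁻¹ • A ^ n) :=
      NormedSpace.expSeries_summable' (𝕂 := ℝ) A
    have heval : NormedSpace.exp A x = ∑' n : ℕ, ((n.factorial : ℝ))⁻¹ • (A ^ n) x := by
      rw [NormedSpace.exp_eq_tsum (𝕂 := ℝ)]
      have := (ContinuousLinearMap.apply ℝ H x).map_tsum hsum
      simpa using this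
    have hsum' : Summable (fun n : ℕ => ((n.factorial : ℝ))⁻¹ • (A ^ n) x) := by
      have := hsum.map (ContinuousLinearMap.apply ℝ H x)
        (ContinuousLinearMap.apply ℝ H x).continuous
      simpa [Function.comp_def] using this
    rw [heval, Q.map_tsum hsum']
    congr 1
    ext n
    rw [map_smul, hpow n]
  set w : H := NormedSpace.exp A x with hw
  have hker : ∀ j, (inner ℝ w (Q (L (h j))) : ℝ) = -(inner ℝ (L w) (h j) : ℝ) := by
    intro j
    rw [hQsym, hkey]
    have := hL w (h j)
    linarith
  rw [hP' (L w)]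
  simp only [hker, neg_smul, Finset.sum_neg_distrib, neg_neg]
end
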